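/- Let L and L₀ be 3×3 real symmetric positive definite matrices, let F be an invertible 3×3 real matrix, and set G = L^{-1/2} F L₀^{1/2}. Then |adj G| ≥ C₂ |adj F| with C₂ = (1/3) · l_min(L₀)/l_max(L). -/

import Mathlib

/-!
The adjugate is multiplicative, so with `A = L^{1/2}`, `B = L₀^{1/2}` we get
`adj G = adj B · adj F · adj A⁻¹`, where both outer factors are symmetric with squares
`adj L₀` and `adj L⁻¹`. Conjugating the spectral decomposition shows that the eigenvalues of
these are products of two eigenvalues of `L₀`, resp. of `L⁻¹`, so in the Loewner order
`adj L₀ ≥ l_min(L₀)² · 1` and `adj L⁻¹ ≥ l_max(L)⁻² · 1`. Sandwiching `adj F` between them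
gives `|adj G|² ≥ (l_min(L₀) / l_max(L))² |adj F|²`, which is stronger than the claim.
-/

open Matrix

/-- Frobenius norm of a 3×3 real matrix: |M| = √(tr(Mᵀ M)). -/
noncomputable def frobNorm (M : Matrix (Fin 3) (Fin 3) ℝ) : ℝ :=
  Real.sqrt (Matrix.trace (Mᵀ * M))

/-- Smallest eigenvalue of a symmetric (Hermitian) real matrix. -/
noncomputable def lMin {M : Matrix (Fin 3) (Fin 3) ℝ} (h : M.IsHermitian) : ℝ :=
  ⨅ i, h.eigenvalues i

/-- Largest eigenvalue of a symmetric (Hermitian) real matrix. -/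
noncomputable def lMax {M : Matrix (Fin 3) (Fin 3) ℝ} (h : M.IsHermitian) : ℝ :=
  ⨆ i, h.eigenvalues i

/-- The unique symmetric positive (semi)definite square root of a positive definite matrix. -/
noncomputable def msqrt {M : Matrix (Fin 3) (Fin 3) ℝ} (h : M.PosDef) : Matrix (Fin 3) (Fin 3) ℝ :=
  (h.1.eigenvectorUnitary : Matrix (Fin 3) (Fin 3) ℝ) *
    diagonal ((↑) ∘ (Real.sqrt ·) ∘ h.1.eigenvalues) *
    (star (h.1.eigenvectorUnitary : Matrix (Fin 3) (Fin 3) ℝ))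

open scoped MatrixOrder

namespace Matrix

section Unitary

variable {n α : Type*} [Fintype n] [DecidableEq n] [CommRing α] [StarRing α]

theorem adjugate_of_mem_unitaryGroup {U : Matrix n n α} (hU : U ∈ unitaryGroup n α) :
    U.adjugate = U.det • star U := by
  calc U.adjugate = (star U * U) * U.adjugate := by rw [mem_unitaryGroup_iff'.mp hU, one_mul]
    _ = U.det • star U := by rw [mul_assoc, mul_adjugate, Matrix.mul_smul, mul_one]

theorem adjugate_unitary_conj_diagonal {U : Matrix n n α} (hU : U ∈ unitaryGroup n α)
    (v : n → α) :
    (U * diagonal v * star U).adjugate =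
      U * diagonal (fun i ↦ ∏ j ∈ Finset.univ.erase i, v j) * star U := by
  have hdet : (star U).det * U.det = 1 := by
    rw [← det_mul, mem_unitaryGroup_iff'.mp hU, det_one]
  rw [adjugate_mul_distrib, adjugate_mul_distrib, adjugate_of_mem_unitaryGroup hU,
    adjugate_of_mem_unitaryGroup (Unitary.star_mem hU), star_star, adjugate_diagonal,
    Matrix.smul_mul, Matrix.mul_smul, Matrix.mul_smul, smul_smul, hdet, one_smul, mul_assoc]

theorem unitary_conj_diagonal_mul_unitary_conj_diagonal {U : Matrix n n α}
    (hU : U ∈ unitaryGroup n α) (v w : n → α) :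
    U * diagonal v * star U * (U * diagonal w * star U) = U * diagonal (v * w) * star U := by
  calc U * diagonal v * star U * (U * diagonal w * star U)
      = U * (diagonal v * (star U * U) * diagonal w) * star U := by simp only [mul_assoc]
    _ = U * diagonal (v * w) * star U := by
        rw [mem_unitaryGroup_iff'.mp hU, mul_one, diagonal_mul_diagonal]; rfl

theorem inv_unitary_conj_diagonal {U : Matrix n n α} (hU : U ∈ unitaryGroup n α)
    {v : n → α} (hv : ∀ i, IsUnit (v i)) :
    (U * diagonal v * star U)⁻¹ = U * diagonal (fun i ↦ Ring.inverse (v i)) * star U := by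
  refine inv_eq_right_inv ?_
  have hvw : (v * fun i ↦ Ring.inverse (v i)) = fun _ ↦ 1 :=
    funext fun i ↦ Ring.mul_inverse_cancel _ (hv i)
  rw [unitary_conj_diagonal_mul_unitary_conj_diagonal hU, hvw, diagonal_one, mul_one,
    mem_unitaryGroup_iff.mp hU]

end Unitary

variable {n : Type*} [Fintype n] [DecidableEq n]

theorem transpose_unitary_conj_diagonal {U : Matrix n n ℝ} (v : n → ℝ) :
    (U * diagonal v * star U)ᵀ = U * diagonal v * star U := by
  rw [← conjTranspose_eq_transpose_of_trivial, conjTranspose_mul, conjTranspose_mul,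
    star_eq_conjTranspose, conjTranspose_conjTranspose, diagonal_conjTranspose, star_trivial,
    mul_assoc]

theorem smul_one_le_unitary_conj_diagonal {U : Matrix n n ℝ} (hU : U ∈ unitaryGroup n ℝ)
    {v : n → ℝ} {c : ℝ} (hc : ∀ i, c ≤ v i) :
    c • 1 ≤ U * diagonal v * star U := by
  have hd : (diagonal fun i ↦ v i - c).PosSemidef :=
    posSemidef_diagonal_iff.mpr fun i ↦ sub_nonneg.mpr (hc i)
  have hconj : U * diagonal v * star U - c • 1 = U * (diagonal fun i ↦ v i - c) * Uᴴ := by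
    rw [← star_eq_conjTranspose, ← diagonal_sub v (fun _ ↦ c), Matrix.mul_sub, Matrix.sub_mul,
      ← smul_one_eq_diagonal, Matrix.mul_smul, Matrix.smul_mul, mul_one,
      mem_unitaryGroup_iff.mp hU]
  rw [le_iff, hconj]
  exact hd.mul_mul_conjTranspose_same U

theorem IsHermitian.eq_unitary_conj_diagonal {A : Matrix n n ℝ} (hA : A.IsHermitian) :
    A = (hA.eigenvectorUnitary : Matrix n n ℝ) * diagonal hA.eigenvalues *
      star (hA.eigenvectorUnitary : Matrix n n ℝ) := by
  simpa using hA.spectral_theorem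

theorem pow_card_sub_one_le_prod_erase {v : n → ℝ} {a : ℝ} (ha : 0 ≤ a) (hv : ∀ j, a ≤ v j)
    (i : n) : a ^ (Fintype.card n - 1) ≤ ∏ j ∈ Finset.univ.erase i, v j := by
  rw [← Finset.card_univ, ← Finset.card_erase_of_mem (Finset.mem_univ i), ← Finset.prod_const]
  exact Finset.prod_le_prod (fun _ _ ↦ ha) fun j _ ↦ hv j

theorem IsHermitian.pow_smul_one_le_adjugate {A : Matrix n n ℝ} (hA : A.IsHermitian) {a : ℝ}
    (ha : 0 ≤ a) (hlow : ∀ i, a ≤ hA.eigenvalues i) :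
    a ^ (Fintype.card n - 1) • 1 ≤ A.adjugate := by
  rw [hA.eq_unitary_conj_diagonal, adjugate_unitary_conj_diagonal (SetLike.coe_mem _)]
  exact smul_one_le_unitary_conj_diagonal (SetLike.coe_mem _)
    (pow_card_sub_one_le_prod_erase ha hlow)

theorem PosDef.pow_inv_smul_one_le_adjugate_inv {A : Matrix n n ℝ} (hA : A.PosDef) {b : ℝ}
    (hup : ∀ i, hA.1.eigenvalues i ≤ b) :
    b⁻¹ ^ (Fintype.card n - 1) • 1 ≤ A⁻¹.adjugate := by
  have hpos := hA.eigenvalues_pos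
  rw [hA.1.eq_unitary_conj_diagonal, inv_unitary_conj_diagonal (SetLike.coe_mem _)
      fun i ↦ (hpos i).ne'.isUnit, adjugate_unitary_conj_diagonal (SetLike.coe_mem _)]
  refine smul_one_le_unitary_conj_diagonal (SetLike.coe_mem _) fun i ↦
    pow_card_sub_one_le_prod_erase (inv_nonneg.mpr ((hpos i).le.trans (hup i))) (fun j ↦ ?_) i
  rw [Ring.inverse_eq_inv']
  exact inv_anti₀ (hpos j) (hup j)

theorem mul_trace_transpose_mul_le {m : Type*} [Fintype m] {H : Matrix n n ℝ} {c : ℝ}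
    (h : c • 1 ≤ H) (M : Matrix n m ℝ) : c * trace (Mᵀ * M) ≤ trace (Mᵀ * H * M) := by
  have hnn := ((le_iff.mp h).conjTranspose_mul_mul_same M).trace_nonneg
  rwa [conjTranspose_eq_transpose_of_trivial, Matrix.mul_sub, Matrix.sub_mul, trace_sub,
    Matrix.mul_smul, Matrix.mul_one, Matrix.smul_mul, trace_smul, smul_eq_mul, sub_nonneg] at hnn

theorem mul_mul_trace_le_trace_sandwich {P Q : Matrix n n ℝ} (hP : Pᵀ = P) (hQ : Qᵀ = Q)
    {c d : ℝ} (hc : 0 ≤ c) (hPP : c • 1 ≤ P * P) (hQQ : d • 1 ≤ Q * Q) (N : Matrix n n ℝ) :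
    c * d * trace (Nᵀ * N) ≤ trace ((P * N * Q)ᵀ * (P * N * Q)) := by
  have hNQ : trace ((N * Q)ᵀ * (N * Q)) = trace (Nᵀᵀ * (Q * Q) * Nᵀ) := by
    rw [trace_mul_comm, transpose_mul, hQ, transpose_transpose, Matrix.mul_assoc,
      Matrix.mul_assoc, Matrix.mul_assoc]
  calc c * d * trace (Nᵀ * N) = c * (d * trace (Nᵀᵀ * Nᵀ)) := by
        rw [transpose_transpose, trace_mul_comm N, mul_assoc]
    _ ≤ c * trace ((N * Q)ᵀ * (N * Q)) := by
        rw [hNQ]; exact mul_le_mul_of_nonneg_left (mul_trace_transpose_mul_le hQQ _) hc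
    _ ≤ trace ((N * Q)ᵀ * (P * P) * (N * Q)) := mul_trace_transpose_mul_le hPP _
    _ = trace ((P * N * Q)ᵀ * (P * N * Q)) := by
        rw [Matrix.mul_assoc P, transpose_mul P, hP]; simp only [Matrix.mul_assoc]

end Matrix

theorem msqrt_transpose {M : Matrix (Fin 3) (Fin 3) ℝ} (h : M.PosDef) : (msqrt h)ᵀ = msqrt h :=
  transpose_unitary_conj_diagonal _

theorem msqrt_mul_self {M : Matrix (Fin 3) (Fin 3) ℝ} (h : M.PosDef) : msqrt h * msqrt h = M := by
  rw [msqrt, unitary_conj_diagonal_mul_unitary_conj_diagonal (SetLike.coe_mem _)]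
  conv_rhs => rw [h.1.eq_unitary_conj_diagonal]
  congr 3
  funext i
  simp [Real.mul_self_sqrt (h.eigenvalues_pos i).le]

theorem lMin_le_eigenvalues {M : Matrix (Fin 3) (Fin 3) ℝ} (h : M.IsHermitian) (i : Fin 3) :
    lMin h ≤ h.eigenvalues i :=
  ciInf_le (Set.finite_range _).bddBelow i

theorem eigenvalues_le_lMax {M : Matrix (Fin 3) (Fin 3) ℝ} (h : M.IsHermitian) (i : Fin 3) :
    h.eigenvalues i ≤ lMax h :=
  le_ciSup (Set.finite_range _).bddAbove i

theorem lMin_pos {M : Matrix (Fin 3) (Fin 3) ℝ} (h : M.PosDef) : 0 < lMin h.isHermitian := by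
  obtain ⟨i, hi⟩ := exists_eq_ciInf_of_finite (f := h.isHermitian.eigenvalues)
  rw [lMin, ← hi]
  exact h.eigenvalues_pos i

theorem frobNorm_nonneg (M : Matrix (Fin 3) (Fin 3) ℝ) : 0 ≤ frobNorm M :=
  Real.sqrt_nonneg _

theorem mul_frobNorm_le {M N : Matrix (Fin 3) (Fin 3) ℝ} {c : ℝ} (hc : 0 ≤ c)
    (h : c ^ 2 * trace (Mᵀ * M) ≤ trace (Nᵀ * N)) : c * frobNorm M ≤ frobNorm N := by
  rw [frobNorm, frobNorm, ← Real.sqrt_sq hc, ← Real.sqrt_mul (sq_nonneg c)]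
  exact Real.sqrt_le_sqrt h

theorem sq_lMin_smul_one_le_adjugate_msqrt_mul_self {M : Matrix (Fin 3) (Fin 3) ℝ}
    (h : M.PosDef) : lMin h.isHermitian ^ 2 • 1 ≤ (msqrt h).adjugate * (msqrt h).adjugate := by
  rw [← adjugate_mul_distrib, msqrt_mul_self]
  simpa using h.isHermitian.pow_smul_one_le_adjugate (lMin_pos h).le (lMin_le_eigenvalues _)

theorem inv_sq_lMax_smul_one_le_adjugate_inv_msqrt_mul_self {M : Matrix (Fin 3) (Fin 3) ℝ}
    (h : M.PosDef) :
    (lMax h.isHermitian)⁻¹ ^ 2 • 1 ≤ (msqrt h)⁻¹.adjugate * (msqrt h)⁻¹.adjugate := by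
  rw [← adjugate_mul_distrib, ← Matrix.mul_inv_rev, msqrt_mul_self]
  simpa using h.pow_inv_smul_one_le_adjugate_inv (eigenvalues_le_lMax _)

theorem stmt3_general (L L0 F : Matrix (Fin 3) (Fin 3) ℝ) (hL : L.PosDef) (hL0 : L0.PosDef) :
    (1 / 3) * (lMin hL0.isHermitian / lMax hL.isHermitian) * frobNorm F.adjugate ≤
      frobNorm ((msqrt hL)⁻¹ * F * msqrt hL0).adjugate := by
  set c := lMin hL0.isHermitian / lMax hL.isHermitian
  have hc : 0 ≤ c :=
    div_nonneg (lMin_pos hL0).le ((hL.eigenvalues_pos 0).le.trans (eigenvalues_le_lMax _ 0))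
  have hB : (msqrt hL0).adjugateᵀ = (msqrt hL0).adjugate := by
    rw [adjugate_transpose, msqrt_transpose]
  have hA : (msqrt hL)⁻¹.adjugateᵀ = (msqrt hL)⁻¹.adjugate := by
    rw [adjugate_transpose, transpose_nonsing_inv, msqrt_transpose]
  have key : c * frobNorm F.adjugate ≤ frobNorm ((msqrt hL)⁻¹ * F * msqrt hL0).adjugate := by
    refine mul_frobNorm_le hc ?_
    rw [div_pow, div_eq_mul_inv, ← inv_pow, adjugate_mul_distrib, adjugate_mul_distrib,
      ← Matrix.mul_assoc (msqrt hL0).adjugate]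
    exact mul_mul_trace_le_trace_sandwich hB hA (sq_nonneg _)
      (sq_lMin_smul_one_le_adjugate_msqrt_mul_self hL0)
      (inv_sq_lMax_smul_one_le_adjugate_inv_msqrt_mul_self hL) F.adjugate
  have hnorm : 0 ≤ c * frobNorm F.adjugate := mul_nonneg hc (frobNorm_nonneg _)
  linarith

theorem stmt3 (L L0 F : Matrix (Fin 3) (Fin 3) ℝ) (hL : L.PosDef) (hL0 : L0.PosDef)
    (hF : IsUnit F.det) :
    (1 / 3) * (lMin hL0.isHermitian / lMax hL.isHermitian) * frobNorm F.adjugate ≤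
      frobNorm ((msqrt hL)⁻¹ * F * msqrt hL0).adjugate :=
  stmt3_general L L0 F hL hL0
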